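/- Let W be a real vector space of dimension 2n+2, let b, λ ∈ W* and Ω ∈ Λ²W*, and suppose ω = Ω + b ∧ λ is nondegenerate (ω^{n+1} ≠ 0) while Ω^{n+1} = 0. Then the kernel of Ω, i.e., {v ∈ W : Ω(v, ·) = 0}, has dimension exactly 2. -/
import Mathlib


/-- Let `W` be a real vector space of dimension `2n+2`, `b, lam ∈ W*`, and let
`Ω` be an alternating 2-form on `W` of corank at least 2 (equivalently,
`Ω^(n+1) = 0`).  If `ω = Ω + b ∧ lam` is nondegenerate, then the kernel
`{v ∈ W : Ω(v,·) = 0}` of `Ω` has dimension exactly 2. -/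
theorem kernel_of_degenerate_part_is_two_dimensional
    {W : Type*} [AddCommGroup W] [Module ℝ W] [FiniteDimensional ℝ W]
    (n : ℕ) (hdim : Module.finrank ℝ W = 2 * n + 2)
    (b lam : Module.Dual ℝ W)
    (Ω : W →ₗ[ℝ] Module.Dual ℝ W)
    (halt : ∀ v : W, Ω v v = 0)
    (hcorank : 2 ≤ Module.finrank ℝ (LinearMap.ker Ω))
    (hnondeg : ∀ v : W, (∀ u : W, Ω v u + b v * lam u - lam v * b u = 0) → v = 0) :
    Module.finrank ℝ (LinearMap.ker Ω) = 2 := by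
  refine le_antisymm ?_ hcorank
  set K := LinearMap.ker Ω
  let f : K →ₗ[ℝ] ℝ × ℝ :=
    (b.comp K.subtype).prod (lam.comp K.subtype)
  have hinj : Function.Injective f := by
    rw [← LinearMap.ker_eq_bot, LinearMap.ker_eq_bot']
    intro v hv
    have hb : b v = 0 := congrArg Prod.fst hv
    have hl : lam v = 0 := congrArg Prod.snd hv
    have hker : Ω (v : W) = 0 := v.2
    have : (v : W) = 0 := by
      apply hnondeg
      intro u
      rw [hker, hb, hl]
      simp
    exact Subtype.ext this
  have := LinearMap.finrank_le_finrank_of_injective hinj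
  simpa using this
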